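/- arXiv:1403.4382 — 2 statements merged into one kernel-verified Lean document; each statement's English description precedes it below -/
import Mathlib

section
/- For any $\delta > 0$ there exists a constant $C > 0$ such that for all $\zeta$ with $|\arg\zeta| < \pi - \delta$ and $|\zeta| \geq 1$: $\left|\sum_{k=1}^{\infty} \frac{c_k}{\zeta+\gamma_k} - \int_1^{\infty} \frac{A}{t^{\alpha}(\zeta + Bt^{\beta})}\, dt\right| \leq \frac{C}{|\zeta|}$, where $c_k = A/k^{\alpha} + O(1/k^{\alpha+1})$ and $\gamma_k = Bk^{\beta} + O(k^{\beta-1})$. -/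
/-!
Compare `c k / (ζ + γ k)` with the integral of `F t = A t^(-α) / (ζ + B t^β)` over
`[k + 1, k + 2]`. In the sector `|arg ζ| ≤ π - δ` one has `‖ζ + s‖ ≥ sin (δ/2) (‖ζ‖ + s)` for
all `s ≥ 0`, so every denominator is bounded below both by a multiple of `‖ζ‖` and by a multiple
of `s`. With `n = k + 1`, replacing `c k` by `A n^(-α)`, then `γ k` by `B n^β`, then `F n` by the
mean of `F` over `[n, n + 1]` (using `‖F' t‖ ≲ t^(-α-1) / ‖ζ‖`) each costs `O(n^(-α-1) / ‖ζ‖)`,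
and these errors are summable because `α > 0`.
-/

open MeasureTheory Set Real

lemma neg_cos_mul_norm_le_re {δ : ℝ} (hδ : 0 ≤ δ) {ζ : ℂ} (harg : |ζ.arg| ≤ π - δ) :
    -cos δ * ‖ζ‖ ≤ ζ.re := by
  rcases eq_or_ne ζ 0 with rfl | hζ
  · simp
  have hcos : cos (π - δ) ≤ cos |ζ.arg| :=
    cos_le_cos_of_nonneg_of_le_pi (abs_nonneg _) (by linarith) harg
  rwa [cos_abs, cos_pi_sub, Complex.cos_arg hζ, le_div_iff₀ (norm_pos_iff.mpr hζ)] at hcos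

lemma sin_half_mul_le_norm_add_ofReal {δ : ℝ} (hδ : 0 ≤ δ) {ζ : ℂ} (harg : |ζ.arg| ≤ π - δ)
    {s : ℝ} (hs : 0 ≤ s) : sin (δ / 2) * (‖ζ‖ + s) ≤ ‖ζ + s‖ := by
  have hre := neg_cos_mul_norm_le_re hδ harg
  have hnorm : ‖ζ + s‖ ^ 2 = ‖ζ‖ ^ 2 + 2 * s * ζ.re + s ^ 2 := by
    simp only [Complex.sq_norm, Complex.normSq_apply, Complex.add_re, Complex.add_im,
      Complex.ofReal_re, Complex.ofReal_im]
    ring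
  refine (le_abs_self _).trans (abs_le_of_sq_le_sq ?_ (norm_nonneg _))
  have hsin : sin (δ / 2) ^ 2 = (1 - cos δ) / 2 := by
    rw [sin_sq, cos_sq, mul_div_cancel₀ _ two_ne_zero]; ring
  rw [mul_pow, hsin, hnorm]
  -- the difference of the two sides is at least `(1 + cos δ) / 2 * (‖ζ‖ - s) ^ 2`
  nlinarith [mul_le_mul_of_nonneg_left hre (by linarith : (0:ℝ) ≤ 2 * s),
    mul_nonneg (by linarith [neg_one_le_cos δ] : (0:ℝ) ≤ 1 + cos δ) (sq_nonneg (‖ζ‖ - s))]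

def SectorBound (m : ℝ) (ζ : ℂ) : Prop :=
  ∀ s : ℝ, 0 ≤ s → m * (‖ζ‖ + s) ≤ ‖ζ + s‖

namespace SectorBound

variable {m : ℝ} {ζ : ℂ} {s : ℝ}

lemma mul_norm_le (h : SectorBound m ζ) (hm : 0 ≤ m) (hs : 0 ≤ s) : m * ‖ζ‖ ≤ ‖ζ + s‖ :=
  le_trans (by nlinarith) (h s hs)

lemma mul_le_norm (h : SectorBound m ζ) (hm : 0 ≤ m) (hs : 0 ≤ s) : m * s ≤ ‖ζ + s‖ :=
  le_trans (by nlinarith [norm_nonneg ζ]) (h s hs)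

lemma add_ofReal_ne_zero (h : SectorBound m ζ) (hm : 0 < m) (hζ : ζ ≠ 0) (hs : 0 ≤ s) :
    ζ + s ≠ 0 :=
  norm_pos_iff.mp <| (mul_pos hm (norm_pos_iff.mpr hζ)).trans_le (h.mul_norm_le hm.le hs)

end SectorBound

section

variable {E : Type*} [NormedAddCommGroup E]

lemma norm_tsum_sub_le_of_hasSum [CompleteSpace E] {ι : Type*} {f g : ι → E} {ε : ι → ℝ}
    {I : E} (hg : HasSum g I) (hε : Summable ε) (h : ∀ k, ‖f k - g k‖ ≤ ε k) :
    ‖∑' k, f k - I‖ ≤ ∑' k, ε k := by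
  have hf : Summable f := by simpa using (hε.of_norm_bounded h).add hg.summable
  rw [← hg.tsum_eq, ← hf.tsum_sub hg.summable]
  exact tsum_of_norm_bounded hε.hasSum h

lemma norm_sub_intervalIntegral_le_of_norm_deriv_le [NormedSpace ℝ E] [CompleteSpace E]
    {f : ℝ → E} {a K : ℝ}
    (hf : ∀ t ∈ Icc a (a + 1), DifferentiableAt ℝ f t)
    (hK : ∀ t ∈ Icc a (a + 1), ‖deriv f t‖ ≤ K) :
    ‖f a - ∫ t in a..a + 1, f t‖ ≤ K := by
  have hint : IntervalIntegrable f volume a (a + 1) :=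
    ContinuousOn.intervalIntegrable_of_Icc (by linarith)
      fun t ht => (hf t ht).continuousAt.continuousWithinAt
  have hconst : ∫ _ in a..a + 1, f a = f a := by simp
  rw [← hconst, ← intervalIntegral.integral_sub intervalIntegrable_const hint]
  refine (intervalIntegral.norm_integral_le_of_norm_le_const (C := K) fun t ht => ?_).trans
    (by simp)
  rw [uIoc_of_le (by linarith)] at ht
  rw [norm_sub_rev]
  refine (convex_Icc a (a + 1)).norm_image_sub_le_of_norm_deriv_le hf hK
    (left_mem_Icc.mpr (by linarith)) (Ioc_subset_Icc_self ht) |>.trans ?_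
  rw [Real.norm_of_nonneg (by linarith [ht.1])]
  exact mul_le_of_le_one_right ((norm_nonneg _).trans (hK a (left_mem_Icc.mpr (by linarith))))
    (by linarith [ht.2])

lemma hasSum_intervalIntegral_of_integrableOn_Ioi [NormedSpace ℝ E] {f : ℝ → E} {a : ℝ}
    (hf : IntegrableOn f (Ioi a)) :
    HasSum (fun k : ℕ => ∫ t in k + a..k + a + 1, f t) (∫ t in Ioi a, f t) := by
  have hmono : Monotone fun k : ℕ => (k : ℝ) + a := fun i j hij => by simpa using hij
  have hunbdd : ¬BddAbove (range fun k : ℕ => (k : ℝ) + a) := by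
    refine not_bddAbove_iff.mpr fun x => ?_
    obtain ⟨k, hk⟩ := exists_nat_gt (x - a)
    exact ⟨k + a, mem_range_self k, by linarith⟩
  have hunion : ⋃ k : ℕ, Ioc ((k : ℝ) + a) ((k : ℝ) + a + 1) = Ioi a := by
    simpa [add_right_comm] using
      iUnion_Ioc_map_succ_eq_Ioi (fun k => hmono (Nat.zero_le k)) hunbdd
  have hdisj : Pairwise (Function.onFun Disjoint
      fun k : ℕ => Ioc ((k : ℝ) + a) ((k : ℝ) + a + 1)) := by
    simpa [add_right_comm] using hmono.pairwise_disjoint_on_Ioc_succ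
  rw [← hunion] at hf ⊢
  simpa [intervalIntegral.integral_of_le] using
    hasSum_integral_iUnion (fun k => measurableSet_Ioc) hdisj hf

end

noncomputable def stieltjesIntegrand (A B α β : ℝ) (ζ : ℂ) (t : ℝ) : ℂ :=
  A / (((t ^ α : ℝ) : ℂ) * (ζ + ((B * t ^ β : ℝ) : ℂ)))

section StieltjesIntegrand

variable {A B α β m : ℝ} {ζ : ℂ} {t : ℝ}

lemma norm_stieltjesIntegrand_le {L : ℝ} (hA : 0 ≤ A) (ht : 0 < t) (hL : 0 < L)
    (hLζ : L ≤ ‖ζ + ((B * t ^ β : ℝ) : ℂ)‖) :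
    ‖stieltjesIntegrand A B α β ζ t‖ ≤ A / (t ^ α * L) := by
  rw [stieltjesIntegrand, norm_div, norm_mul, Complex.norm_real, Complex.norm_real,
    Real.norm_of_nonneg hA, Real.norm_of_nonneg (rpow_nonneg ht.le _)]
  gcongr

lemma hasDerivAt_stieltjesIntegrand (ht : 0 < t) (hζ : ζ + ((B * t ^ β : ℝ) : ℂ) ≠ 0) :
    HasDerivAt (stieltjesIntegrand A B α β ζ)
      (-stieltjesIntegrand A B α β ζ t *
        (((α / t : ℝ) : ℂ) + ((B * β * t ^ (β - 1) : ℝ) : ℂ) / (ζ + ((B * t ^ β : ℝ) : ℂ)))) t := by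
  have hu : HasDerivAt (fun t : ℝ => ((t ^ α : ℝ) : ℂ)) ((α * t ^ (α - 1) : ℝ) : ℂ) t :=
    (hasDerivAt_rpow_const (Or.inl ht.ne')).ofReal_comp
  have hw : HasDerivAt (fun t : ℝ => ζ + ((B * t ^ β : ℝ) : ℂ))
      ((B * (β * t ^ (β - 1)) : ℝ) : ℂ) t :=
    (((hasDerivAt_rpow_const (Or.inl ht.ne')).const_mul B).ofReal_comp).const_add ζ
  have htα : ((t ^ α : ℝ) : ℂ) ≠ 0 := Complex.ofReal_ne_zero.mpr (rpow_pos_of_pos ht α).ne'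
  refine ((hasDerivAt_const t (A : ℂ)).div (hu.mul hw) (mul_ne_zero htα hζ)).congr_deriv ?_
  have ht' : (t : ℂ) ≠ 0 := Complex.ofReal_ne_zero.mpr ht.ne'
  simp only [stieltjesIntegrand, Pi.mul_apply, rpow_sub_one ht.ne']
  push_cast at hζ ⊢
  field_simp
  ring

lemma norm_deriv_stieltjesIntegrand_le (hsec : SectorBound m ζ) (hm : 0 < m) (hζ : ζ ≠ 0)
    (hA : 0 ≤ A) (hB : 0 < B) (hα : 0 ≤ α) (hβ : 0 ≤ β) (ht : 0 < t) :
    ‖deriv (stieltjesIntegrand A B α β ζ) t‖ ≤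
      (A * α / m + A * β / m ^ 2) / (t ^ (α + 1) * ‖ζ‖) := by
  have hBt : 0 ≤ B * t ^ β := by positivity
  have hx : 0 < ‖ζ‖ := norm_pos_iff.mpr hζ
  rw [(hasDerivAt_stieltjesIntegrand ht (hsec.add_ofReal_ne_zero hm hζ hBt)).deriv, norm_mul,
    norm_neg]
  have hF : ‖stieltjesIntegrand A B α β ζ t‖ ≤ A / (t ^ α * (m * ‖ζ‖)) :=
    norm_stieltjesIntegrand_le hA ht (by positivity) (hsec.mul_norm_le hm.le hBt)
  have hlog : ‖((α / t : ℝ) : ℂ) + ((B * β * t ^ (β - 1) : ℝ) : ℂ) / (ζ + ((B * t ^ β : ℝ) : ℂ))‖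
      ≤ α / t + β / (m * t) := by
    refine (norm_add_le _ _).trans (add_le_add ?_ ?_)
    · rw [Complex.norm_real, Real.norm_of_nonneg (by positivity)]
    rw [norm_div, Complex.norm_real, Real.norm_of_nonneg (by positivity)]
    calc B * β * t ^ (β - 1) / ‖ζ + ((B * t ^ β : ℝ) : ℂ)‖
        ≤ B * β * t ^ (β - 1) / (m * (B * t ^ β)) := by
          gcongr
          exact hsec.mul_le_norm hm.le hBt
      _ = β / (m * t) := by
          rw [rpow_sub_one ht.ne']
          field_simp
  calc _ ≤ A / (t ^ α * (m * ‖ζ‖)) * (α / t + β / (m * t)) :=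
        mul_le_mul hF hlog (norm_nonneg _) (by positivity)
    _ = _ := by
        rw [rpow_add_one ht.ne']
        field_simp

lemma norm_stieltjesIntegrand_sub_intervalIntegral_le {n : ℝ} (hsec : SectorBound m ζ)
    (hm : 0 < m) (hζ : ζ ≠ 0) (hA : 0 ≤ A) (hB : 0 < B) (hα : 0 ≤ α) (hβ : 0 ≤ β) (hn : 0 < n) :
    ‖stieltjesIntegrand A B α β ζ n - ∫ t in n..n + 1, stieltjesIntegrand A B α β ζ t‖ ≤
      (A * α / m + A * β / m ^ 2) / (n ^ (α + 1) * ‖ζ‖) := by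
  refine norm_sub_intervalIntegral_le_of_norm_deriv_le (fun t ht => ?_) (fun t ht => ?_)
  · have ht0 : 0 < t := hn.trans_le ht.1
    exact (hasDerivAt_stieltjesIntegrand ht0
      (hsec.add_ofReal_ne_zero hm hζ (by positivity))).differentiableAt
  · have ht0 : 0 < t := hn.trans_le ht.1
    refine (norm_deriv_stieltjesIntegrand_le hsec hm hζ hA hB hα hβ ht0).trans ?_
    have hx : 0 < ‖ζ‖ := norm_pos_iff.mpr hζ
    gcongr
    exact ht.1

lemma norm_div_sub_stieltjesIntegrand_le {n γ Cγ : ℝ} (hsec : SectorBound m ζ) (hm : 0 < m)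
    (hζ : ζ ≠ 0) (hA : 0 ≤ A) (hB : 0 < B) (hn : 0 < n) (hγ : 0 ≤ γ)
    (hγn : |γ - B * n ^ β| ≤ Cγ * n ^ (β - 1)) :
    ‖((A / n ^ α : ℝ) : ℂ) / (ζ + γ) - stieltjesIntegrand A B α β ζ n‖ ≤
      A * Cγ / (m ^ 2 * B) / (n ^ (α + 1) * ‖ζ‖) := by
  have hBn : 0 ≤ B * n ^ β := by positivity
  have hx : 0 < ‖ζ‖ := norm_pos_iff.mpr hζ
  have hw1 := hsec.add_ofReal_ne_zero hm hζ hγ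
  have hw2 := hsec.add_ofReal_ne_zero hm hζ hBn
  have hnα : ((n ^ α : ℝ) : ℂ) ≠ 0 := Complex.ofReal_ne_zero.mpr (rpow_pos_of_pos hn α).ne'
  have heq : ((A / n ^ α : ℝ) : ℂ) / (ζ + γ) - stieltjesIntegrand A B α β ζ n =
      ((A / n ^ α * (B * n ^ β - γ) : ℝ) : ℂ) / ((ζ + γ) * (ζ + ((B * n ^ β : ℝ) : ℂ))) := by
    rw [stieltjesIntegrand]
    push_cast at hw1 hw2 hnα ⊢
    field_simp
    ring
  rw [heq, norm_div, norm_mul, Complex.norm_real, Real.norm_eq_abs, abs_mul,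
    abs_of_nonneg (by positivity), abs_sub_comm]
  have hCγ : 0 ≤ Cγ * n ^ (β - 1) := (abs_nonneg _).trans hγn
  calc A / n ^ α * |γ - B * n ^ β| / (‖ζ + γ‖ * ‖ζ + ((B * n ^ β : ℝ) : ℂ)‖)
      ≤ A / n ^ α * (Cγ * n ^ (β - 1)) / ((m * ‖ζ‖) * (m * (B * n ^ β))) := by
        gcongr
        · exact hsec.mul_norm_le hm.le hγ
        · exact hsec.mul_le_norm hm.le hBn
    _ = _ := by
        rw [rpow_sub_one hn.ne', rpow_add_one hn.ne']
        field_simp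

lemma norm_div_sub_intervalIntegral_le {n c γ Cc Cγ : ℝ} (hsec : SectorBound m ζ) (hm : 0 < m)
    (hζ : ζ ≠ 0) (hA : 0 ≤ A) (hB : 0 < B) (hα : 0 ≤ α) (hβ : 0 ≤ β) (hn : 0 < n) (hγ : 0 ≤ γ)
    (hcn : |c - A / n ^ α| ≤ Cc / n ^ (α + 1)) (hγn : |γ - B * n ^ β| ≤ Cγ * n ^ (β - 1)) :
    ‖(c : ℂ) / (ζ + γ) - ∫ t in n..n + 1, stieltjesIntegrand A B α β ζ t‖ ≤
      (Cc / m + A * Cγ / (m ^ 2 * B) + (A * α / m + A * β / m ^ 2)) / (n ^ (α + 1) * ‖ζ‖) := by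
  have hx : 0 < ‖ζ‖ := norm_pos_iff.mpr hζ
  have hc : ‖(c : ℂ) / (ζ + γ) - ((A / n ^ α : ℝ) : ℂ) / (ζ + γ)‖ ≤
      Cc / m / (n ^ (α + 1) * ‖ζ‖) := by
    rw [← sub_div, ← Complex.ofReal_sub, norm_div, Complex.norm_real, Real.norm_eq_abs]
    calc _ ≤ Cc / n ^ (α + 1) / (m * ‖ζ‖) :=
          div_le_div₀ ((abs_nonneg _).trans hcn) hcn (by positivity) (hsec.mul_norm_le hm.le hγ)
      _ = _ := by field_simp
  refine (norm_sub_le_norm_sub_add_norm_sub _ _ _).trans <| (add_le_add hc <|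
    (norm_sub_le_norm_sub_add_norm_sub _ _ _).trans <| add_le_add
      (norm_div_sub_stieltjesIntegrand_le hsec hm hζ hA hB hn hγ hγn)
      (norm_stieltjesIntegrand_sub_intervalIntegral_le hsec hm hζ hA hB hα hβ hn)).trans_eq ?_
  ring

lemma integrableOn_Ioi_stieltjesIntegrand (hsec : SectorBound m ζ) (hm : 0 < m) (hζ : ζ ≠ 0)
    (hA : 0 ≤ A) (hB : 0 < B) (hαβ : 1 < α + β) :
    IntegrableOn (stieltjesIntegrand A B α β ζ) (Ioi 1) := by
  have hcont : ContinuousOn (stieltjesIntegrand A B α β ζ) (Ioi 1) := fun t ht => by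
    have ht0 : 0 < t := zero_lt_one.trans ht
    exact (hasDerivAt_stieltjesIntegrand ht0
      (hsec.add_ofReal_ne_zero hm hζ (by positivity))).continuousAt.continuousWithinAt
  refine ((integrableOn_Ioi_rpow_of_lt (show -(α + β) < -1 by linarith) one_pos).const_mul
    (A / (m * B))).mono' (hcont.aestronglyMeasurable measurableSet_Ioi) ?_
  refine (ae_restrict_iff' measurableSet_Ioi).mpr (ae_of_all _ fun t (ht : 1 < t) => ?_)
  have ht0 : 0 < t := zero_lt_one.trans ht
  calc _ ≤ A / (t ^ α * (m * (B * t ^ β))) :=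
        norm_stieltjesIntegrand_le hA ht0 (by positivity)
          (hsec.mul_le_norm hm.le (by positivity))
    _ = A / (m * B) * t ^ (-(α + β)) := by
        rw [rpow_neg ht0.le, rpow_add ht0]
        field_simp

end StieltjesIntegrand

lemma norm_tsum_div_sub_integral_le {A B α β m Cc Cγ : ℝ} {ζ : ℂ} {c γ : ℕ → ℝ}
    (hsec : SectorBound m ζ) (hm : 0 < m) (hζ : ζ ≠ 0) (hA : 0 ≤ A) (hB : 0 < B) (hα : 0 < α)
    (hβ : 0 ≤ β) (hαβ : 1 < α + β) (hγ : ∀ k, 0 ≤ γ k)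
    (hca : ∀ k : ℕ, |c k - A / ((k : ℝ) + 1) ^ α| ≤ Cc / ((k : ℝ) + 1) ^ (α + 1))
    (hγa : ∀ k : ℕ, |γ k - B * ((k : ℝ) + 1) ^ β| ≤ Cγ * ((k : ℝ) + 1) ^ (β - 1)) :
    ‖∑' k, (c k : ℂ) / (ζ + γ k) - ∫ t in Ioi (1 : ℝ), stieltjesIntegrand A B α β ζ t‖ ≤
      (Cc / m + A * Cγ / (m ^ 2 * B) + (A * α / m + A * β / m ^ 2)) *
        (∑' k : ℕ, 1 / ((k : ℝ) + 1) ^ (α + 1)) / ‖ζ‖ := by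
  set D := Cc / m + A * Cγ / (m ^ 2 * B) + (A * α / m + A * β / m ^ 2)
  have hsum : Summable fun k : ℕ => 1 / ((k : ℝ) + 1) ^ (α + 1) := by
    refine ((Real.summable_one_div_nat_add_rpow 1 (α + 1)).mpr (by linarith)).congr fun k => ?_
    rw [abs_of_pos (Nat.cast_add_one_pos k)]
  refine (norm_tsum_sub_le_of_hasSum (hasSum_intervalIntegral_of_integrableOn_Ioi
    (integrableOn_Ioi_stieltjesIntegrand hsec hm hζ hA hB hαβ)) (hsum.mul_left (D / ‖ζ‖))
    fun k => ?_).trans_eq ?_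
  · refine (norm_div_sub_intervalIntegral_le hsec hm hζ hA hB hα.le hβ (Nat.cast_add_one_pos k)
      (hγ k) (hca k) (hγa k)).trans_eq ?_
    ring
  · rw [tsum_mul_left]
    ring

theorem stmt14_general (A B α β : ℝ) (hA : 0 < A) (hB : 0 < B) (hα0 : 0 < α)
    (hβ : 0 < β) (hαβ : 1 < α + β)
    (c γ : ℕ → ℝ) (hγpos : ∀ k, 0 < γ k)
    (hca : ∃ C, ∀ k : ℕ, |c k - A / ((k : ℝ) + 1) ^ α| ≤ C / ((k : ℝ) + 1) ^ (α + 1))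
    (hγa : ∃ C, ∀ k : ℕ, |γ k - B * ((k : ℝ) + 1) ^ β| ≤ C * ((k : ℝ) + 1) ^ (β - 1))
    (δ : ℝ) (hδ : 0 < δ) :
    ∃ C > 0, ∀ ζ : ℂ, |Complex.arg ζ| < Real.pi - δ → 1 ≤ ‖ζ‖ →
      ‖(∑' k, (c k : ℂ) / (ζ + (γ k : ℂ))) -
          ∫ t in Set.Ioi (1 : ℝ),
            (A : ℂ) / (((t ^ α : ℝ) : ℂ) * (ζ + ((B * t ^ β : ℝ) : ℂ)))‖
        ≤ C / ‖ζ‖ := by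
  obtain ⟨Cc, hca⟩ := hca
  obtain ⟨Cγ, hγa⟩ := hγa
  set m := sin (δ / 2)
  set C := (Cc / m + A * Cγ / (m ^ 2 * B) + (A * α / m + A * β / m ^ 2)) *
    ∑' k : ℕ, 1 / ((k : ℝ) + 1) ^ (α + 1)
  refine ⟨max C 1, by positivity, fun ζ harg hζ => ?_⟩
  have hδπ : δ < π := by linarith [abs_nonneg ζ.arg]
  have hm : 0 < m := sin_pos_of_pos_of_lt_pi (by linarith) (by linarith)
  have hsec : SectorBound m ζ := fun s hs => sin_half_mul_le_norm_add_ofReal hδ.le harg.le hs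
  have hζ0 : ζ ≠ 0 := norm_pos_iff.mp (one_pos.trans_le hζ)
  refine (norm_tsum_div_sub_integral_le hsec hm hζ0 hA.le hB hα0 hβ.le hαβ
    (fun k => (hγpos k).le) hca hγa).trans ?_
  gcongr
  exact le_max_left _ _

/-- Approximation of `K̂(ζ) = ∑ c k/(ζ+γ k)` by the integral
`h(ζ) = ∫₁^∞ A/(t^α (ζ + B t^β)) dt`: for every `δ > 0` there is `C > 0` with
`|K̂(ζ) - h(ζ)| ≤ C/|ζ|` on the sector `|arg ζ| < π - δ`, `|ζ| ≥ 1`. Here the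
sequences are indexed so that `c k = A/(k+1)^α + O(1/(k+1)^{α+1})` and
`γ k = B (k+1)^β + O((k+1)^{β-1})`. -/
theorem stmt14 (A B α β : ℝ) (hA : 0 < A) (hB : 0 < B) (hα0 : 0 < α) (hα1 : α ≤ 1)
    (hβ : 0 < β) (hαβ : 1 < α + β)
    (c γ : ℕ → ℝ) (hc : ∀ k, 0 < c k) (hγpos : ∀ k, 0 < γ k) (hmono : StrictMono γ)
    (hca : ∃ C, ∀ k : ℕ, |c k - A / ((k : ℝ) + 1) ^ α| ≤ C / ((k : ℝ) + 1) ^ (α + 1))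
    (hγa : ∃ C, ∀ k : ℕ, |γ k - B * ((k : ℝ) + 1) ^ β| ≤ C * ((k : ℝ) + 1) ^ (β - 1))
    (hsumratio : Summable fun k => c k / γ k) (hS : (∑' k, c k / γ k) < 1)
    (δ : ℝ) (hδ : 0 < δ) :
    ∃ C > 0, ∀ ζ : ℂ, |Complex.arg ζ| < Real.pi - δ → 1 ≤ ‖ζ‖ →
      ‖(∑' k, (c k : ℂ) / (ζ + (γ k : ℂ))) -
          ∫ t in Set.Ioi (1 : ℝ),
            (A : ℂ) / (((t ^ α : ℝ) : ℂ) * (ζ + ((B * t ^ β : ℝ) : ℂ)))‖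
        ≤ C / ‖ζ‖ :=
  stmt14_general A B α β hA hB hα0 hβ hαβ c γ hγpos hca hγa δ hδ
end

section
/- Suppose $\gamma_{N}/( \gamma_{N+1} - \gamma_N) \leq C_1 B N^{p}$ eventually (which follows from $\gamma_k = Bk^\beta + O(k^{\beta-1})$ and $\gamma_{k+1}-\gamma_k \asymp k^{\beta-p}$). Then with $X_N = (\gamma_N+\gamma_{N+1})/2$, for every $a > 0$ and $\xi \in (0,1)$: $q(X_N) := 1 + \frac{1}{a^{2(1-\xi)}}\sum_{k=1}^{\infty}\frac{c_k}{|X_N - \gamma_k|} \leq \frac{2C_1 B N^{p} S}{a^{2(1-\xi)}} + 1$, where $S = \sum_k c_k/\gamma_k$; and consequently $q(X_N)/X_N^2 \to 0$ as $N \to \infty$ whenever $p < 2\beta$. -/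
/-!
Write `d = γ (N + 1) - γ N`. Since no `γ k` lies strictly between `γ N` and `γ (N + 1)`, every
term satisfies `c k / |X_N - γ k| ≤ 2 c k / d`, and for `k > N` also
`c k / |X_N - γ k| ≤ (2 γ (N + 1) / d) (c k / γ k)`. Against the target `(2 γ N / d) S` the head
terms gain `(2 / d) ∑_{k ≤ N} (c k / γ k) (γ N - γ k)` while the tail loses `2 ∑_{k > N} c k / γ k`;
the gain of the single term `k = 0` covers the loss as soon as `d = O(γ N)` and the tail of `S` is
small. Then `γ N / d ≤ C₁ B N^p` gives the bound, and `X_N ≥ γ N ≳ N^β` gives the limit.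
-/

open Filter Finset Asymptotics Topology

section MidpointSum

variable {γ c : ℕ → ℝ} {N : ℕ}

theorem half_gap_le_abs_midpoint_sub (hγ : StrictMono γ) (k : ℕ) :
    (γ (N + 1) - γ N) / 2 ≤ |(γ N + γ (N + 1)) / 2 - γ k| := by
  rcases le_or_gt k N with hk | hk
  · have := hγ.monotone hk
    exact le_abs.2 (Or.inl (by linarith))
  · have := hγ.monotone (Nat.succ_le_of_lt hk)
    exact le_abs.2 (Or.inr (by linarith))

theorem div_abs_midpoint_sub_le (hγ : StrictMono γ) (hc : 0 ≤ c k) :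
    c k / |(γ N + γ (N + 1)) / 2 - γ k| ≤ 2 * c k / (γ (N + 1) - γ N) := by
  have hd : 0 < γ (N + 1) - γ N := sub_pos.2 (hγ N.lt_succ_self)
  calc c k / |(γ N + γ (N + 1)) / 2 - γ k| ≤ c k / ((γ (N + 1) - γ N) / 2) :=
        div_le_div_of_nonneg_left hc (by positivity) (half_gap_le_abs_midpoint_sub hγ k)
    _ = 2 * c k / (γ (N + 1) - γ N) := by field_simp

theorem div_abs_midpoint_sub_le_of_lt (hγ : StrictMono γ) (hγpos : ∀ k, 0 < γ k) (hc : 0 ≤ c k)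
    (hk : N < k) :
    c k / |(γ N + γ (N + 1)) / 2 - γ k| ≤ 2 * γ (N + 1) / (γ (N + 1) - γ N) * (c k / γ k) := by
  have hd : 0 < γ (N + 1) - γ N := sub_pos.2 (hγ N.lt_succ_self)
  have hk' : γ (N + 1) ≤ γ k := hγ.monotone hk
  have hX : 0 < γ k - (γ N + γ (N + 1)) / 2 := by linarith
  rw [abs_sub_comm, abs_of_pos hX, div_mul_div_comm, div_le_div_iff₀ hX (mul_pos hd (hγpos k))]
  -- `2 γ (N+1) (γ k - X_N) - d γ k = (γ N + γ (N+1)) (γ k - γ (N+1))`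
  nlinarith [mul_nonneg (mul_nonneg hc (sub_nonneg.2 hk')) (add_pos (hγpos N) (hγpos (N + 1))).le]

theorem tsum_div_abs_midpoint_sub_le (hγ : StrictMono γ) (hγpos : ∀ k, 0 < γ k)
    (hc : ∀ k, 0 ≤ c k) (hS : Summable fun k => c k / γ k)
    (hslack : (γ (N + 1) - γ N) * ∑' k, c (k + (N + 1)) / γ (k + (N + 1)) ≤
      c 0 / γ 0 * (γ N - γ 0)) :
    ∑' k, c k / |(γ N + γ (N + 1)) / 2 - γ k| ≤
      2 * γ N / (γ (N + 1) - γ N) * ∑' k, c k / γ k := by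
  set d := γ (N + 1) - γ N with hd_def
  set X := (γ N + γ (N + 1)) / 2
  set T := ∑' k, c (k + (N + 1)) / γ (k + (N + 1))
  have hd : 0 < d := sub_pos.2 (hγ N.lt_succ_self)
  have htail_le (k : ℕ) : c (k + (N + 1)) / |X - γ (k + (N + 1))| ≤
      2 * γ (N + 1) / d * (c (k + (N + 1)) / γ (k + (N + 1))) :=
    div_abs_midpoint_sub_le_of_lt hγ hγpos (hc _) (by omega)
  have hT : Summable fun k => c (k + (N + 1)) / γ (k + (N + 1)) :=
    (summable_nat_add_iff (N + 1)).2 hS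
  have hLtail : Summable fun k => c (k + (N + 1)) / |X - γ (k + (N + 1))| :=
    (hT.mul_left _).of_nonneg_of_le (fun k => div_nonneg (hc _) (abs_nonneg _)) htail_le
  have hL : Summable fun k => c k / |X - γ k| := (summable_nat_add_iff (N + 1)).1 hLtail
  have hgain : ∑ k ∈ range (N + 1), c k + d * T ≤ γ N * ∑ k ∈ range (N + 1), c k / γ k := by
    have hterm : ∀ k ∈ range (N + 1), 0 ≤ c k / γ k * (γ N - γ k) := fun k hk =>
      mul_nonneg (div_nonneg (hc k) (hγpos k).le)
        (sub_nonneg.2 (hγ.monotone (Nat.lt_succ_iff.1 (mem_range.1 hk))))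
    have hsplit : γ N * ∑ k ∈ range (N + 1), c k / γ k - ∑ k ∈ range (N + 1), c k =
        ∑ k ∈ range (N + 1), c k / γ k * (γ N - γ k) := by
      rw [mul_sum, ← sum_sub_distrib]
      refine sum_congr rfl fun k _ => ?_
      field_simp [(hγpos k).ne']
    linarith [single_le_sum hterm (mem_range.2 N.succ_pos)]
  have hγsucc : γ (N + 1) = γ N + d := by rw [hd_def]; ring
  calc ∑' k, c k / |X - γ k|
      = ∑ k ∈ range (N + 1), c k / |X - γ k| + ∑' k, c (k + (N + 1)) / |X - γ (k + (N + 1))| :=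
        (hL.sum_add_tsum_nat_add (N + 1)).symm
    _ ≤ ∑ k ∈ range (N + 1), 2 * c k / d + 2 * γ (N + 1) / d * T :=
        add_le_add (sum_le_sum fun k _ => div_abs_midpoint_sub_le hγ (hc k))
          ((hLtail.tsum_le_tsum htail_le (hT.mul_left _)).trans_eq tsum_mul_left)
    _ = 2 / d * (∑ k ∈ range (N + 1), c k + d * T + γ N * T) := by
      rw [hγsucc, ← sum_div, ← mul_sum]
      field_simp
      ring
    _ ≤ 2 / d * (γ N * ∑ k ∈ range (N + 1), c k / γ k + γ N * T) := by gcongr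
    _ = 2 * γ N / d * ∑' k, c k / γ k := by
      rw [← hS.sum_add_tsum_nat_add (N + 1)]
      ring

end MidpointSum

theorem eventually_gap_mul_tail_le {γ f : ℕ → ℝ} (hγ : Tendsto γ atTop atTop)
    (hgap : (fun N => γ (N + 1) - γ N) =O[atTop] γ) (hf0 : 0 < f 0) :
    ∀ᶠ N in atTop, (γ (N + 1) - γ N) * ∑' k, f (k + (N + 1)) ≤ f 0 * (γ N - γ 0) := by
  obtain ⟨K, hK, hKgap⟩ := hgap.exists_pos
  have hT : Tendsto (fun N => ∑' k, f (k + (N + 1))) atTop (𝓝 0) :=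
    (tendsto_sum_nat_add f).comp (tendsto_add_atTop_nat 1)
  have hTsmall : ∀ᶠ N in atTop, ‖∑' k, f (k + (N + 1))‖ ≤ f 0 / (2 * K) :=
    hT.norm.eventually (ge_mem_nhds (by rw [norm_zero]; positivity))
  filter_upwards [hKgap.bound, hTsmall, hγ.eventually_ge_atTop 0,
    hγ.eventually_ge_atTop (2 * γ 0)] with N hgapN hTN hγN hγN0
  calc (γ (N + 1) - γ N) * ∑' k, f (k + (N + 1))
      ≤ ‖γ (N + 1) - γ N‖ * ‖∑' k, f (k + (N + 1))‖ := by
        rw [← norm_mul]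
        exact Real.le_norm_self _
    _ ≤ K * ‖γ N‖ * (f 0 / (2 * K)) := mul_le_mul hgapN hTN (norm_nonneg _) (by positivity)
    _ = f 0 * γ N / 2 := by
      rw [Real.norm_of_nonneg hγN]
      field_simp
    _ ≤ f 0 * (γ N - γ 0) := by nlinarith

theorem eventually_tsum_div_abs_midpoint_sub_le {γ c r : ℕ → ℝ} (hγ : StrictMono γ)
    (hγpos : ∀ k, 0 < γ k) (hc : ∀ k, 0 ≤ c k) (hc0 : 0 < c 0) (hS : Summable fun k => c k / γ k)
    (hγtop : Tendsto γ atTop atTop) (hgap : (fun N => γ (N + 1) - γ N) =O[atTop] γ)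
    (hratio : ∀ᶠ N in atTop, γ N / (γ (N + 1) - γ N) ≤ r N) :
    ∀ᶠ N in atTop,
      ∑' k, c k / |(γ N + γ (N + 1)) / 2 - γ k| ≤ 2 * r N * ∑' k, c k / γ k := by
  have hS0 : 0 ≤ ∑' k, c k / γ k := tsum_nonneg fun k => div_nonneg (hc k) (hγpos k).le
  filter_upwards [eventually_gap_mul_tail_le (f := fun k => c k / γ k) hγtop hgap
    (div_pos hc0 (hγpos 0)), hratio] with N hslack hratioN
  calc ∑' k, c k / |(γ N + γ (N + 1)) / 2 - γ k|
      ≤ 2 * (γ N / (γ (N + 1) - γ N)) * ∑' k, c k / γ k :=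
        (tsum_div_abs_midpoint_sub_le hγ hγpos hc hS hslack).trans_eq (by ring)
    _ ≤ 2 * r N * ∑' k, c k / γ k := by gcongr

theorem eventually_half_mul_rpow_le {γ : ℕ → ℝ} {B β C : ℝ} (hB : 0 < B)
    (hγ : ∀ k : ℕ, 1 ≤ k → |γ k - B * (k : ℝ) ^ β| ≤ C * (k : ℝ) ^ (β - 1)) :
    ∀ᶠ k : ℕ in atTop, B / 2 * (k : ℝ) ^ β ≤ γ k := by
  filter_upwards [eventually_ge_atTop 1, (tendsto_natCast_atTop_atTop.const_mul_atTop
    (half_pos hB)).eventually_ge_atTop C] with k hk hCk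
  have hk0 : (0 : ℝ) < k := by exact_mod_cast hk
  have hpow : 0 < (k : ℝ) ^ β := Real.rpow_pos_of_pos hk0 β
  have herr : C * (k : ℝ) ^ (β - 1) ≤ B / 2 * (k : ℝ) ^ β := by
    rw [Real.rpow_sub_one hk0.ne', mul_div_assoc', div_le_iff₀ hk0]
    nlinarith
  linarith [(abs_le.1 (hγ k hk)).1]

theorem isBigO_gap_of_rpow_bounds {γ : ℕ → ℝ} {b β p D : ℝ} (hb : 0 < b) (hp : 0 ≤ p)
    (hD : 0 ≤ D) (hγ : Monotone γ)
    (hgap : ∀ᶠ k : ℕ in atTop, γ (k + 1) - γ k ≤ D * (k : ℝ) ^ (β - p))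
    (hlow : ∀ᶠ k : ℕ in atTop, b * (k : ℝ) ^ β ≤ γ k) :
    (fun k => γ (k + 1) - γ k) =O[atTop] γ := by
  refine IsBigO.of_bound (D / b) ?_
  filter_upwards [hgap, hlow, eventually_ge_atTop 1] with k hgapk hlowk hk
  have hk1 : (1 : ℝ) ≤ k := by exact_mod_cast hk
  have hγk : 0 ≤ γ k := le_trans (by positivity) hlowk
  rw [Real.norm_of_nonneg (sub_nonneg.2 (hγ k.le_succ)), Real.norm_of_nonneg hγk]
  calc γ (k + 1) - γ k ≤ D * (k : ℝ) ^ (β - p) := hgapk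
    _ ≤ D * (k : ℝ) ^ β := by gcongr; linarith
    _ = D / b * (b * (k : ℝ) ^ β) := by field_simp
    _ ≤ D / b * γ k := by gcongr

theorem tendsto_rpow_add_div_sq_rpow {A E b β p : ℝ} (hβ : 0 < β) (hpβ : p < 2 * β) :
    Tendsto (fun x : ℝ => (A * x ^ p + E) / (b * x ^ β) ^ 2) atTop (𝓝 0) := by
  have hlim : Tendsto (fun x : ℝ => (A * x ^ (-(2 * β - p)) + E * x ^ (-(2 * β))) / b ^ 2)
      atTop (𝓝 ((A * 0 + E * 0) / b ^ 2)) :=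
    (((tendsto_rpow_neg_atTop (by linarith)).const_mul A).add
      ((tendsto_rpow_neg_atTop (by linarith)).const_mul E)).div_const _
  rw [mul_zero, mul_zero, add_zero, zero_div] at hlim
  refine hlim.congr' ?_
  filter_upwards [eventually_gt_atTop 0] with x hx
  have hsq : x ^ (2 * β) = (x ^ β) ^ 2 := by
    rw [mul_comm, Real.rpow_mul hx.le, Real.rpow_two]
  rw [neg_sub, Real.rpow_sub hx, Real.rpow_neg hx.le, hsq]
  ring

theorem tendsto_div_sq_of_le_rpow {u v : ℕ → ℝ} {A E b β p : ℝ} (hb : 0 < b) (hβ : 0 < β)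
    (hpβ : p < 2 * β) (hu0 : ∀ N, 0 ≤ u N) (hu : ∀ᶠ N : ℕ in atTop, u N ≤ A * (N : ℝ) ^ p + E)
    (hv : ∀ᶠ N : ℕ in atTop, b * (N : ℝ) ^ β ≤ v N) :
    Tendsto (fun N => u N / v N ^ 2) atTop (𝓝 0) := by
  refine squeeze_zero' (Eventually.of_forall fun N => div_nonneg (hu0 N) (sq_nonneg _)) ?_
    ((tendsto_rpow_add_div_sq_rpow (A := A) (E := E) (b := b) hβ hpβ).comp tendsto_natCast_atTop_atTop)
  filter_upwards [hu, hv, eventually_gt_atTop 0] with N huN hvN hN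
  have hpos : 0 < b * (N : ℝ) ^ β := mul_pos hb (Real.rpow_pos_of_pos (by exact_mod_cast hN) β)
  exact div_le_div₀ ((hu0 N).trans huN) huN (pow_pos hpos 2) (pow_le_pow_left₀ hpos.le hvN 2)

theorem stmt18_general (B β p C1 : ℝ) (hB : 0 < B) (hβ : 0 < β) (hp : 1 ≤ p) (hpβ : p < 2 * β)
    (γ c : ℕ → ℝ) (hγpos : ∀ k, 0 < γ k) (hmono : StrictMono γ)
    (hγa : ∃ C, ∀ k : ℕ, 1 ≤ k → |γ k - B * (k : ℝ) ^ β| ≤ C * (k : ℝ) ^ (β - 1))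
    (hgap : ∃ D1 > 0, ∃ D2 > 0, ∀ᶠ k : ℕ in atTop,
      D1 * (k : ℝ) ^ (β - p) ≤ γ (k + 1) - γ k ∧
      γ (k + 1) - γ k ≤ D2 * (k : ℝ) ^ (β - p))
    (hc : ∀ k, 0 < c k) (hS : Summable fun k => c k / γ k)
    (hratio : ∀ᶠ N : ℕ in atTop, γ N / (γ (N + 1) - γ N) ≤ C1 * B * (N : ℝ) ^ p)
    (a ξ : ℝ) (ha : 0 < a) :
    (∀ᶠ N : ℕ in atTop,
      1 + (1 / a ^ (2 * (1 - ξ))) *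
          (∑' k, c k / |(γ N + γ (N + 1)) / 2 - γ k|)
        ≤ 2 * C1 * B * (N : ℝ) ^ p * (∑' k, c k / γ k) / a ^ (2 * (1 - ξ)) + 1) ∧
    Tendsto (fun N : ℕ =>
        (1 + (1 / a ^ (2 * (1 - ξ))) *
            (∑' k, c k / |(γ N + γ (N + 1)) / 2 - γ k|)) /
          ((γ N + γ (N + 1)) / 2) ^ 2)
      atTop (nhds 0) := by
  obtain ⟨C, hC⟩ := hγa
  obtain ⟨_, _, D2, hD2, hgap⟩ := hgap
  have ha' : 0 < a ^ (2 * (1 - ξ)) := Real.rpow_pos_of_pos ha _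
  have hlow := eventually_half_mul_rpow_le hB hC
  have hγtop : Tendsto γ atTop atTop := tendsto_atTop_mono' atTop hlow
    (((tendsto_rpow_atTop hβ).comp tendsto_natCast_atTop_atTop).const_mul_atTop (half_pos hB))
  have hgapO := isBigO_gap_of_rpow_bounds (half_pos hB) (zero_le_one.trans hp) hD2.le
    hmono.monotone (hgap.mono fun _ hk => hk.2) hlow
  have hbound : ∀ᶠ N : ℕ in atTop,
      1 + (1 / a ^ (2 * (1 - ξ))) * (∑' k, c k / |(γ N + γ (N + 1)) / 2 - γ k|)
        ≤ 2 * C1 * B * (N : ℝ) ^ p * (∑' k, c k / γ k) / a ^ (2 * (1 - ξ)) + 1 := by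
    filter_upwards [eventually_tsum_div_abs_midpoint_sub_le hmono hγpos (fun k => (hc k).le)
      (hc 0) hS hγtop hgapO hratio] with N hN
    rw [one_div_mul_eq_div, mul_assoc 2 C1, mul_assoc 2 (C1 * B)]
    linarith [div_le_div_of_nonneg_right hN ha'.le]
  have hq_nonneg (N : ℕ) :
      0 ≤ 1 + (1 / a ^ (2 * (1 - ξ))) * (∑' k, c k / |(γ N + γ (N + 1)) / 2 - γ k|) := by
    have : 0 ≤ ∑' k, c k / |(γ N + γ (N + 1)) / 2 - γ k| :=
      tsum_nonneg fun k => div_nonneg (hc k).le (abs_nonneg _)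
    positivity
  refine ⟨hbound, tendsto_div_sq_of_le_rpow (A := 2 * C1 * B * (∑' k, c k / γ k) / a ^ (2 * (1 - ξ)))
    (E := 1) (half_pos hB) hβ hpβ hq_nonneg
    (hbound.mono fun N hN => hN.trans_eq (by ring)) ?_⟩
  filter_upwards [hlow] with N hN
  linarith [hmono N.lt_succ_self]

/-- If eventually `γ N / (γ (N+1) - γ N) ≤ C₁ B N^p` (as follows from
`γ k = B k^β + O(k^{β-1})` and `γ_{k+1} - γ k ≍ k^{β-p}`), then with
`X_N = (γ N + γ (N+1))/2` and `q(X_N) = 1 + a^{-2(1-ξ)} ∑ c k / |X_N - γ k|`,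
eventually `q(X_N) ≤ 2C₁ B N^p S / a^{2(1-ξ)} + 1` where `S = ∑ c k/γ k`, and
`q(X_N)/X_N² → 0` as `N → ∞` (since `p < 2β`). -/
theorem stmt18 (B β p C1 : ℝ) (hB : 0 < B) (hβ : 0 < β) (hp : 1 ≤ p) (hpβ : p < 2 * β)
    (hC1 : 0 < C1) (γ c : ℕ → ℝ) (hγpos : ∀ k, 0 < γ k) (hmono : StrictMono γ)
    (hγa : ∃ C, ∀ k : ℕ, 1 ≤ k → |γ k - B * (k : ℝ) ^ β| ≤ C * (k : ℝ) ^ (β - 1))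
    (hgap : ∃ D1 > 0, ∃ D2 > 0, ∀ᶠ k : ℕ in atTop,
      D1 * (k : ℝ) ^ (β - p) ≤ γ (k + 1) - γ k ∧
      γ (k + 1) - γ k ≤ D2 * (k : ℝ) ^ (β - p))
    (hc : ∀ k, 0 < c k) (hS : Summable fun k => c k / γ k)
    (hratio : ∀ᶠ N : ℕ in atTop, γ N / (γ (N + 1) - γ N) ≤ C1 * B * (N : ℝ) ^ p)
    (a ξ : ℝ) (ha : 0 < a) (hξ : ξ ∈ Set.Ioo (0 : ℝ) 1) :
    (∀ᶠ N : ℕ in atTop,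
      1 + (1 / a ^ (2 * (1 - ξ))) *
          (∑' k, c k / |(γ N + γ (N + 1)) / 2 - γ k|)
        ≤ 2 * C1 * B * (N : ℝ) ^ p * (∑' k, c k / γ k) / a ^ (2 * (1 - ξ)) + 1) ∧
    Tendsto (fun N : ℕ =>
        (1 + (1 / a ^ (2 * (1 - ξ))) *
            (∑' k, c k / |(γ N + γ (N + 1)) / 2 - γ k|)) /
          ((γ N + γ (N + 1)) / 2) ^ 2)
      atTop (nhds 0) :=
  stmt18_general B β p C1 hB hβ hp hpβ γ c hγpos hmono hγa hgap hc hS hratio a ξ ha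
end
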